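/- Under the near/far classification of I-structure entries, the set of I-entries relevant to a query at node ℓ = locus(P) (those stored at proper ancestors of ℓ with origin in the subtree of ℓ) is exactly the disjoint union of: (i) near entries stored at nodes on the path from ℓ (exclusive) to its lowest marked ancestor u (inclusive) with origin in subtree(ℓ); (ii) far entries moved to the combined structure at u having ζ-value < ζ(ℓ) and origin in subtree(ℓ); and (iii) far entries in combined structures at marked proper ancestors of u with origin in subtree(ℓ). -/
import Mathlib


/-- A finite rooted tree, given by a parent function, a depth function and an LCA
operation satisfying the usual specifications.  `parent root = root`, and every node
reaches the root by iterating `parent` (guaranteed by the depth axioms). -/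
structure RTree (V : Type*) where
  root : V
  parent : V → V
  lca : V → V → V
  depth : V → ℕ
  parent_root : parent root = root
  depth_eq_zero_iff : ∀ v, depth v = 0 ↔ v = root
  depth_parent : ∀ v, v ≠ root → depth (parent v) + 1 = depth v
  lca_anc_left : ∀ u v, ∃ k, parent^[k] u = lca u v
  lca_anc_right : ∀ u v, ∃ k, parent^[k] v = lca u v
  lca_greatest : ∀ u v w, (∃ k, parent^[k] u = w) → (∃ k, parent^[k] v = w) →
    ∃ k, parent^[k] (lca u v) = w

namespace RTree

variable {V : Type*} (T : RTree V)

/-- `u` is an ancestor of `v` (possibly `u = v`). -/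
def Anc (u v : V) : Prop := ∃ k, T.parent^[k] v = u

/-- `u` is a proper (strict) ancestor of `v`. -/
def ProperAnc (u v : V) : Prop := T.Anc u v ∧ u ≠ v

/-- `c` is a child of `u`. -/
def IsChild (c u : V) : Prop := T.parent c = u ∧ c ≠ u

/-- A leaf is a node without children. -/
def IsLeaf (v : V) : Prop := ∀ c, ¬ T.IsChild c v

end RTree

/-- An I-entry stored at `w` with origin `v` is *near* if no node on the path from `v`
(inclusive) up to `w` (exclusive) is marked. -/
def NearEntry {V : Type*} (T : RTree V) (marked : V → Prop) (w v : V) : Prop :=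
  ∀ x, T.Anc w x → x ≠ w → T.Anc x v → ¬ marked x

/-- `u` is the lowest marked ancestor-or-self of `x`. -/
def IsLMA {V : Type*} (T : RTree V) (marked : V → Prop) (u x : V) : Prop :=
  marked u ∧ T.Anc u x ∧ ∀ y, marked y → T.Anc y x → T.Anc y u

/-- Number of parent steps from `w` up to `u` (the distance `ζ`, when `u` is the lowest
marked ancestor-or-self of `w`). -/
noncomputable def distTo {V : Type*} (T : RTree V) (w u : V) : ℕ :=
  sInf {k : ℕ | T.parent^[k] w = u}

namespace RTree

variable {V : Type*} (T : RTree V)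

lemma anc_refl (v : V) : T.Anc v v := ⟨0, rfl⟩

lemma anc_trans {a b c : V} (h1 : T.Anc a b) (h2 : T.Anc b c) : T.Anc a c := by
  obtain ⟨j, hj⟩ := h2; obtain ⟨k, hk⟩ := h1
  exact ⟨k + j, by rw [Function.iterate_add_apply, hj, hk]⟩

lemma iterate_root (k : ℕ) : T.parent^[k] T.root = T.root :=
  Function.iterate_fixed T.parent_root k

lemma depth_parent_le (x : V) : T.depth (T.parent x) ≤ T.depth x := by
  by_cases h : x = T.root
  · subst h; rw [T.parent_root]
  · have := T.depth_parent x h; omega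

lemma depth_iterate_le (k : ℕ) (v : V) : T.depth (T.parent^[k] v) ≤ T.depth v := by
  induction k with
  | zero => simp
  | succ k ih =>
    rw [Function.iterate_succ_apply']
    exact le_trans (T.depth_parent_le _) ih

lemma depth_le_of_anc {a v : V} (h : T.Anc a v) : T.depth a ≤ T.depth v := by
  obtain ⟨k, hk⟩ := h; rw [← hk]; exact T.depth_iterate_le k v

lemma eq_of_iterate_depth (k : ℕ) (v : V)
    (h : T.depth (T.parent^[k] v) = T.depth v) : T.parent^[k] v = v := by
  induction k with
  | zero => rfl
  | succ k ih =>
    rw [Function.iterate_succ_apply'] at h ⊢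
    have h1 : T.depth (T.parent (T.parent^[k] v)) ≤ T.depth (T.parent^[k] v) :=
      T.depth_parent_le _
    have h2 : T.depth (T.parent^[k] v) ≤ T.depth v := T.depth_iterate_le k v
    by_cases hr : T.parent^[k] v = T.root
    · have hv0 : T.depth v = 0 := by
        rw [hr, T.parent_root] at h
        rw [← h, (T.depth_eq_zero_iff T.root).2 rfl]
      have hv : v = T.root := (T.depth_eq_zero_iff v).1 hv0
      rw [hr, T.parent_root, hv]
    · have := T.depth_parent _ hr; omega

lemma anc_antisymm {a b : V} (h1 : T.Anc a b) (h2 : T.Anc b a) : a = b := by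
  obtain ⟨k, hk⟩ := h1
  have hle : T.depth a ≤ T.depth b := T.depth_le_of_anc ⟨k, hk⟩
  have hge : T.depth b ≤ T.depth a := T.depth_le_of_anc h2
  have := T.eq_of_iterate_depth k b (by rw [hk]; omega)
  rw [← hk, this]

lemma anc_total {a b x : V} (ha : T.Anc a x) (hb : T.Anc b x) :
    T.Anc a b ∨ T.Anc b a := by
  obtain ⟨j, hj⟩ := ha; obtain ⟨k, hk⟩ := hb
  rcases le_total j k with h | h
  · right
    refine ⟨k - j, ?_⟩
    rw [← hj, ← Function.iterate_add_apply, ← hk]; congr 1; omega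
  · left
    refine ⟨j - k, ?_⟩
    rw [← hk, ← Function.iterate_add_apply, ← hj]; congr 1; omega

lemma anc_root (v : V) : T.Anc T.root v := by
  suffices h : ∀ n v, T.depth v ≤ n → T.Anc T.root v from h _ v le_rfl
  intro n
  induction n with
  | zero =>
    intro v hv
    have : v = T.root := (T.depth_eq_zero_iff v).1 (Nat.le_zero.1 hv)
    exact this ▸ T.anc_refl _
  | succ n ih =>
    intro v hv
    by_cases h : v = T.root
    · exact h ▸ T.anc_refl _
    · have hd := T.depth_parent v h
      have h1 : T.Anc T.root (T.parent v) := ih _ (by omega)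
      exact T.anc_trans h1 ⟨1, Function.iterate_one T.parent ▸ rfl⟩

lemma depth_lt_of_proper {a b : V} (h : T.ProperAnc a b) : T.depth a < T.depth b := by
  obtain ⟨⟨k, hk⟩, hne⟩ := h
  have hle : T.depth a ≤ T.depth b := T.depth_le_of_anc ⟨k, hk⟩
  rcases lt_or_eq_of_le hle with h' | h'
  · exact h'
  · exact absurd (by rw [← hk, T.eq_of_iterate_depth k b (by rw [hk]; omega)]) hne

lemma exists_lma (marked : V → Prop) (hroot : marked T.root) (w : V) :
    ∃ u, IsLMA T marked u w := by
  have hne : {k : ℕ | marked (T.parent^[k] w)}.Nonempty := by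
    obtain ⟨k, hk⟩ := T.anc_root w
    exact ⟨k, by simpa [Set.mem_setOf_eq, hk] using hroot⟩
  have hmem : marked (T.parent^[sInf {k : ℕ | marked (T.parent^[k] w)}] w) :=
    Nat.sInf_mem hne
  refine ⟨T.parent^[sInf {k : ℕ | marked (T.parent^[k] w)}] w, hmem, ⟨_, rfl⟩, ?_⟩
  rintro y hy ⟨j, hj⟩
  rcases le_or_gt (sInf {k : ℕ | marked (T.parent^[k] w)}) j with h | h
  · refine ⟨j - sInf {k : ℕ | marked (T.parent^[k] w)}, ?_⟩
    rw [← Function.iterate_add_apply, ← hj]; congr 1; omega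
  · have : j ∈ {k : ℕ | marked (T.parent^[k] w)} := by
      simp only [Set.mem_setOf_eq, hj]; exact hy
    exact absurd (Nat.sInf_le this) (by omega)

lemma lma_unique {marked : V → Prop} {u u' x : V}
    (h : IsLMA T marked u x) (h' : IsLMA T marked u' x) : u = u' :=
  T.anc_antisymm (h'.2.2 u h.1 h.2.1) (h.2.2 u' h'.1 h'.2.1)

lemma distTo_eq {u w : V} (h : T.Anc u w) :
    distTo T w u = T.depth w - T.depth u := by
  obtain ⟨k0, hk0⟩ := h
  have hne : {k : ℕ | T.parent^[k] w = u}.Nonempty := ⟨k0, hk0⟩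
  have hku : T.parent^[sInf {k : ℕ | T.parent^[k] w = u}] w = u := Nat.sInf_mem hne
  set k := sInf {k : ℕ | T.parent^[k] w = u} with hkdef
  have step : ∀ i, i ≤ k → T.depth (T.parent^[i] w) + i = T.depth w := by
    intro i hi
    induction i with
    | zero => simp
    | succ i ih =>
      have hi' : i < k := Nat.lt_of_succ_le hi
      have hih := ih (le_of_lt hi')
      have hroot : T.parent^[i] w ≠ T.root := by
        intro hr
        have hur : u = T.root := by
          have : T.parent^[k] w = T.parent^[k - i] (T.parent^[i] w) := by
            rw [← Function.iterate_add_apply]; congr 1; omega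
          rw [hku, hr, T.iterate_root] at this
          exact this
        have hi_mem : i ∈ {k : ℕ | T.parent^[k] w = u} := by
          simp only [Set.mem_setOf_eq, hr, hur]
        exact absurd (Nat.sInf_le hi_mem) (by omega)
      have := T.depth_parent _ hroot
      rw [Function.iterate_succ_apply']
      omega
  have hk_eq := step k le_rfl
  rw [hku] at hk_eq
  unfold distTo
  omega

end RTree

/-- Mark the nodes at depth divisible by `π`.  Let `Entry w v` mean
an I-entry stored at `w` with origin `v` in the subtree of `w`, `v ≠ w`; far entries
(those that are not near) are relocated to the lowest marked ancestor-or-self of `w`,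
tagged with `ζ(w)`.  Let `ℓ` be a query node with lowest marked ancestor-or-self `u`.
Then the set of query-relevant entries — entries stored at proper ancestors of `ℓ` with
origin in the subtree of `ℓ` — is exactly the disjoint union of:
(i) near entries at nodes on the path from `ℓ` (exclusive) to `u` (inclusive) with
origin in the subtree of `ℓ`;
(ii) far entries relocated to `u` with `ζ(w) < ζ(ℓ)` and origin in the subtree of `ℓ`;
(iii) far entries relocated to marked proper ancestors of `u` with origin in the
subtree of `ℓ`.
Moreover no near entry stored at a proper ancestor of `u` has origin in the subtree
of `u`. -/
theorem near_far_decomposition {V : Type*} (T : RTree V) (π : ℕ) (hπ : 1 ≤ π)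
    (Entry : V → V → Prop) (hE : ∀ w v, Entry w v → T.ProperAnc w v)
    (ℓ u : V) (hu : IsLMA T (fun x => π ∣ T.depth x) u ℓ) :
    ({p : V × V | Entry p.1 p.2 ∧ T.ProperAnc p.1 ℓ ∧ T.Anc ℓ p.2} =
      {p : V × V | Entry p.1 p.2 ∧ NearEntry T (fun x => π ∣ T.depth x) p.1 p.2 ∧
        T.ProperAnc p.1 ℓ ∧ T.Anc u p.1 ∧ T.Anc ℓ p.2} ∪
      {p : V × V | Entry p.1 p.2 ∧ ¬ NearEntry T (fun x => π ∣ T.depth x) p.1 p.2 ∧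
        IsLMA T (fun x => π ∣ T.depth x) u p.1 ∧ distTo T p.1 u < distTo T ℓ u ∧
        T.Anc ℓ p.2} ∪
      {p : V × V | Entry p.1 p.2 ∧ ¬ NearEntry T (fun x => π ∣ T.depth x) p.1 p.2 ∧
        (∃ u', IsLMA T (fun x => π ∣ T.depth x) u' p.1 ∧ T.ProperAnc u' u) ∧
        T.Anc ℓ p.2}) ∧
    (Disjoint
      {p : V × V | Entry p.1 p.2 ∧ NearEntry T (fun x => π ∣ T.depth x) p.1 p.2 ∧
        T.ProperAnc p.1 ℓ ∧ T.Anc u p.1 ∧ T.Anc ℓ p.2}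
      ({p : V × V | Entry p.1 p.2 ∧ ¬ NearEntry T (fun x => π ∣ T.depth x) p.1 p.2 ∧
        IsLMA T (fun x => π ∣ T.depth x) u p.1 ∧ distTo T p.1 u < distTo T ℓ u ∧
        T.Anc ℓ p.2} ∪
       {p : V × V | Entry p.1 p.2 ∧ ¬ NearEntry T (fun x => π ∣ T.depth x) p.1 p.2 ∧
        (∃ u', IsLMA T (fun x => π ∣ T.depth x) u' p.1 ∧ T.ProperAnc u' u) ∧
        T.Anc ℓ p.2})) ∧
    (Disjoint
      {p : V × V | Entry p.1 p.2 ∧ ¬ NearEntry T (fun x => π ∣ T.depth x) p.1 p.2 ∧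
        IsLMA T (fun x => π ∣ T.depth x) u p.1 ∧ distTo T p.1 u < distTo T ℓ u ∧
        T.Anc ℓ p.2}
      {p : V × V | Entry p.1 p.2 ∧ ¬ NearEntry T (fun x => π ∣ T.depth x) p.1 p.2 ∧
        (∃ u', IsLMA T (fun x => π ∣ T.depth x) u' p.1 ∧ T.ProperAnc u' u) ∧
        T.Anc ℓ p.2}) ∧
    (∀ w v, Entry w v → NearEntry T (fun x => π ∣ T.depth x) w v →
      T.ProperAnc w u → ¬ T.Anc u v) := by
  have h0 : T.depth T.root = 0 := (T.depth_eq_zero_iff T.root).2 rfl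
  have hMroot : π ∣ T.depth T.root := by rw [h0]; exact dvd_zero π
  refine ⟨?_, ?_, ?_, ?_⟩
  · -- set equality
    ext ⟨w, v⟩
    simp only [Set.mem_union, Set.mem_setOf_eq]
    constructor
    · rintro ⟨hEwv, hwl, hlv⟩
      by_cases hnear : NearEntry T (fun x => π ∣ T.depth x) w v
      · left; left
        refine ⟨hEwv, hnear, hwl, ?_, hlv⟩
        by_contra hnw
        rcases T.anc_total hu.2.1 hwl.1 with h | h
        · exact hnw h
        · have hne : u ≠ w := fun he => hnw (he ▸ T.anc_refl u)
          exact hnear u h hne (T.anc_trans hu.2.1 hlv) hu.1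
      · obtain ⟨u', hu'⟩ := T.exists_lma (fun x => π ∣ T.depth x) hMroot w
        have hu'u : T.Anc u' u := hu.2.2 u' hu'.1 (T.anc_trans hu'.2.1 hwl.1)
        by_cases h : u' = u
        · subst h
          left; right
          refine ⟨hEwv, hnear, hu', ?_, hlv⟩
          rw [T.distTo_eq hu'.2.1, T.distTo_eq hu.2.1]
          have h1 : T.depth u' ≤ T.depth w := T.depth_le_of_anc hu'.2.1
          have h2 : T.depth w < T.depth ℓ := T.depth_lt_of_proper hwl
          omega
        · exact Or.inr ⟨hEwv, hnear, ⟨u', hu', hu'u, h⟩, hlv⟩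
    · rintro ((⟨h1, h2, h3, h4, h5⟩ | ⟨h1, h2, h3, h4, h5⟩) | ⟨h1, h2, ⟨u', hu', hpu⟩, h5⟩)
      · exact ⟨h1, h3, h5⟩
      · have hwv : T.Anc w v := (hE w v h1).1
        have hdu : T.depth u ≤ T.depth w := T.depth_le_of_anc h3.2.1
        have hdul : T.depth u ≤ T.depth ℓ := T.depth_le_of_anc hu.2.1
        rw [T.distTo_eq h3.2.1, T.distTo_eq hu.2.1] at h4
        have hwlt : T.depth w < T.depth ℓ := by omega
        rcases T.anc_total hwv h5 with h | h
        · refine ⟨h1, ⟨h, fun he => ?_⟩, h5⟩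
          subst he; omega
        · exact absurd (T.depth_le_of_anc h) (by omega)
      · have hwv : T.Anc w v := (hE w v h1).1
        have hcon : ¬ T.Anc ℓ w := by
          intro hlw
          have huw : T.Anc u w := T.anc_trans hu.2.1 hlw
          have : T.Anc u u' := hu'.2.2 u hu.1 huw
          exact hpu.2 (T.anc_antisymm hpu.1 this)
        rcases T.anc_total hwv h5 with h | h
        · exact ⟨h1, ⟨h, fun he => hcon (he ▸ T.anc_refl ℓ)⟩, h5⟩
        · exact absurd h hcon
  · rw [Set.disjoint_left]
    rintro ⟨w, v⟩ h1 h2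
    simp only [Set.mem_union, Set.mem_setOf_eq] at h1 h2
    rcases h2 with ⟨_, hnn, _⟩ | ⟨_, hnn, _⟩ <;> exact hnn h1.2.1
  · rw [Set.disjoint_left]
    rintro ⟨w, v⟩ h1 h2
    simp only [Set.mem_setOf_eq] at h1 h2
    obtain ⟨_, _, hlma, _, _⟩ := h1
    obtain ⟨_, _, ⟨u', hu', hpu⟩, _⟩ := h2
    exact hpu.2 (T.lma_unique hu' hlma)
  · intro w v _ hnear hwu huv
    exact hnear u hwu.1 (Ne.symm hwu.2) huv hu.1
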